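/- Every infinite sequence that can be generated by a morphism with exponential growth has Diophantine exponent strictly greater than 1. That is, if a = φ(σ^ω(a₀)) where σ is a morphism on a finite alphabet A prolongable on a₀, all letters of A occur in σ^ω(a₀), the spectral radius of the incidence matrix M_σ is > 1, and φ is a coding, then dio(a) > 1. -/

import Mathlib

/-- `w` is a prefix of the infinite word `a`. -/
def IsPrefOf {A : Type*} (w : List A) (a : ℕ → A) : Prop :=
  ∀ i : Fin w.length, w.get i = a i

/-- Fractional power `V^α`: `V^⌊α⌋` followed by the prefix of `V`
of length `⌈{α}·|V|⌉`. -/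
noncomputable def fracPow {A : Type*} (V : List A) (α : ℝ) : List A :=
  (List.replicate ⌊α⌋₊ V).flatten ++ V.take ⌈Int.fract α * V.length⌉₊

/-- The set of admissible exponents in the definition of the Diophantine exponent. -/
def dioSet {A : Type*} (a : ℕ → A) : Set ℝ :=
  {ρ | ∀ N : ℕ, ∃ (U V : List A) (α : ℝ), V ≠ [] ∧ 1 ≤ α ∧
    IsPrefOf (U ++ fracPow V α) a ∧ N ≤ (U ++ fracPow V α).length ∧
    ρ ≤ ((U ++ fracPow V α).length : ℝ) / ((U.length : ℝ) + (V.length : ℝ))}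

/-- Diophantine exponent of an infinite word. -/
noncomputable def dio {A : Type*} (a : ℕ → A) : EReal :=
  sSup ((fun ρ : ℝ => (ρ : EReal)) '' dioSet a)

/-- Action of a morphism (given by its values on letters) on a finite word. -/
def mapW {A : Type*} (σ : A → List A) (w : List A) : List A := w.flatMap σ

/-- `n`-th iterate of a morphism applied to a word. -/
def iterW {A : Type*} (σ : A → List A) (n : ℕ) (w : List A) : List A :=
  (mapW σ)^[n] w

/-- `σ` is prolongable on the letter `a`. -/
def Prolongable {A : Type*} (σ : A → List A) (a : A) : Prop :=
  (∃ W : List A, W ≠ [] ∧ σ a = a :: W) ∧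
  Filter.Tendsto (fun n => (iterW σ n [a]).length) Filter.atTop Filter.atTop

/-- The letter `b` has maximal growth for `σ`. -/
def MaxGrowth {A : Type*} (σ : A → List A) (b : A) : Prop :=
  ∃ C : ℝ, ∀ c : A, ∀ n : ℕ, 1 ≤ n →
    ((iterW σ n [c]).length : ℝ) < C * ((iterW σ n [b]).length : ℝ)

/-- Incidence matrix of a morphism, viewed over `ℂ`. -/
noncomputable def incMat {A : Type*} [Fintype A] [DecidableEq A]
    (σ : A → List A) : Matrix A A ℂ :=
  fun i j => ((σ j).count i : ℂ)

/-- Spectral radius of the incidence matrix of a morphism. -/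
noncomputable def specRad {A : Type*} [Fintype A] [DecidableEq A]
    (σ : A → List A) : ℝ :=
  sSup ((fun μ : ℂ => ‖μ‖) '' spectrum ℂ (incMat σ))

/-!
Applying `σⁿ` to a prefix `u[0, j]` of the fixed point `u` in which a letter `c` occurs at
positions `i < j` gives a prefix `U V σⁿ(c)` of `u` in which `V = σⁿ(u[i, j))` begins with
`σⁿ(c)`, i.e. a prefix `U V^α` whose ratio `|U V^α| / |U V|` is at least
`1 + |σⁿ(c)| / (j · maxₐ |σⁿ(a)|)`. So it suffices to find infinitely many `n` for which a
letter occurring infinitely often in `u` has an image comparable to the longest one.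

A spectral value `μ` of `M_σ` with `|μ| > 1` gives `|μ|ⁿ ≤ ‖M_σⁿ‖∞ ≤ |A| · maxₐ |σⁿ(a)|`.
Since `u` consists of recurrent letters from some position `T` on, and `σˢ` of a prefix
containing every letter is a prefix of `u` of some length `L`,
`maxₐ |σⁿ⁺ˢ(a)| ≤ T · maxₐ |σⁿ(a)| + L · max_{a recurrent} |σⁿ(a)|`. Exponential growth forces
`maxₐ |σⁿ⁺ˢ(a)| > (T + 1) · maxₐ |σⁿ(a)|` for infinitely many `n`, and for those `n` the
recurrent maximum is at least `maxₐ |σⁿ(a)| / L`.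
-/

open Filter Finset Topology

section Iterates

variable {A : Type*} (σ : A → List A)

theorem iterW_succ (n : ℕ) (w : List A) : iterW σ (n + 1) w = iterW σ n (mapW σ w) :=
  Function.iterate_succ_apply _ _ _

theorem iterW_add (m n : ℕ) (w : List A) : iterW σ (m + n) w = iterW σ m (iterW σ n w) :=
  Function.iterate_add_apply _ _ _ _

theorem iterW_nil (n : ℕ) : iterW σ n ([] : List A) = [] := by
  induction n with
  | zero => rfl
  | succ n ih => exact (iterW_succ σ n []).trans ih

theorem iterW_append (n : ℕ) (w w' : List A) :
    iterW σ n (w ++ w') = iterW σ n w ++ iterW σ n w' := by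
  induction n generalizing w w' with
  | zero => rfl
  | succ n ih => simp only [iterW_succ, mapW, List.flatMap_append, ih]

theorem length_iterW (n : ℕ) (w : List A) :
    (iterW σ n w).length = (w.map fun c => (iterW σ n [c]).length).sum := by
  induction w with
  | nil => simp [iterW_nil]
  | cons c w ih =>
    rw [← List.singleton_append, iterW_append, List.length_append, ih]
    simp

theorem List.IsPrefix.iterW {w w' : List A} (h : w <+: w') (n : ℕ) :
    _root_.iterW σ n w <+: _root_.iterW σ n w' := by
  obtain ⟨t, rfl⟩ := h
  exact ⟨_root_.iterW σ n t, (iterW_append σ n w t).symm⟩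

def maxLenOn (s : Finset A) (n : ℕ) : ℕ := s.sup fun c => (iterW σ n [c]).length

theorem length_iterW_singleton_le_maxLenOn {s : Finset A} {c : A} (hc : c ∈ s) (n : ℕ) :
    (iterW σ n [c]).length ≤ maxLenOn σ s n :=
  Finset.le_sup (f := fun c => (iterW σ n [c]).length) hc

theorem length_iterW_le_mul_maxLenOn {s : Finset A} {w : List A} (hw : ∀ c ∈ w, c ∈ s)
    (n : ℕ) : (iterW σ n w).length ≤ w.length * maxLenOn σ s n := by
  rw [length_iterW, ← smul_eq_mul, ← List.length_map (f := fun c => (iterW σ n [c]).length)]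
  refine List.sum_le_card_nsmul _ _ ?_
  simpa using fun c hc => length_iterW_singleton_le_maxLenOn σ (hw c hc) n

theorem maxLenOn_le_length_iterW {s : Finset A} {w : List A} (hw : ∀ c ∈ s, c ∈ w) (n : ℕ) :
    maxLenOn σ s n ≤ (iterW σ n w).length :=
  Finset.sup_le fun c hc => by
    rw [length_iterW σ n w]
    exact List.le_sum_of_mem (M := ℕ) (List.mem_map_of_mem (hw c hc))

end Iterates

section Prefixes

variable {A : Type*} (u : ℕ → A)

def pref (m : ℕ) : List A := (List.range m).map u

@[simp]
theorem length_pref (m : ℕ) : (pref u m).length = m := by simp [pref]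

@[simp]
theorem getElem_pref {m i : ℕ} (h : i < (pref u m).length) : (pref u m)[i] = u i := by
  simp [pref]

theorem pref_add_one (m : ℕ) : pref u (m + 1) = pref u m ++ [u m] := by
  simp [pref, List.range_succ]

theorem take_pref {i m : ℕ} (h : i ≤ m) : (pref u m).take i = pref u i := by
  simp [pref, ← List.map_take, List.take_range, h]

theorem mem_pref {i m : ℕ} (h : i < m) : u i ∈ pref u m :=
  List.mem_map_of_mem (List.mem_range.2 h)

theorem isPrefOf_iff_eq_pref {w : List A} : IsPrefOf w u ↔ w = pref u w.length := by
  refine ⟨fun h => List.ext_getElem (by simp) fun i hi _ => by simpa using h ⟨i, hi⟩,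
    fun h i => by simpa using List.getElem_of_eq h i.2⟩

theorem isPrefOf_pref (m : ℕ) : IsPrefOf (pref u m) u :=
  (isPrefOf_iff_eq_pref u).2 (by rw [length_pref])

theorem IsPrefOf.prefix_of_length_le {w w' : List A} (h : IsPrefOf w u) (h' : IsPrefOf w' u)
    (hl : w.length ≤ w'.length) : w <+: w' := by
  rw [isPrefOf_iff_eq_pref] at h h'
  rw [List.prefix_iff_eq_take, h', take_pref u hl, ← h]

theorem IsPrefOf.of_prefix {w w' : List A} (h : w <+: w') (h' : IsPrefOf w' u) :
    IsPrefOf w u := fun i => by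
  rw [List.get_eq_getElem, h.getElem]
  exact h' ⟨i, h.length_le.trans_lt' i.2⟩

theorem IsPrefOf.map {B : Type*} (φ : A → B) {w : List A} (h : IsPrefOf w u) :
    IsPrefOf (w.map φ) fun i => φ (u i) := fun i => by
  have hi : (i : ℕ) < w.length := by simpa using i.2
  simpa using congrArg φ (h ⟨i, hi⟩)

end Prefixes

def IsFixedWord {A : Type*} (σ : A → List A) (u : ℕ → A) : Prop :=
  ∀ ⦃w : List A⦄, IsPrefOf w u → ∀ n, IsPrefOf (iterW σ n w) u

theorem isFixedWord_of_tendsto {A : Type*} {σ : A → List A} {a₀ : A} {u : ℕ → A}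
    (htend : Tendsto (fun n => (iterW σ n [a₀]).length) atTop atTop)
    (hu : ∀ n, IsPrefOf (iterW σ n [a₀]) u) : IsFixedWord σ u := fun w hw m => by
  obtain ⟨m', hm'⟩ := (htend.eventually_ge_atTop w.length).exists
  refine (hu (m + m')).of_prefix u ?_
  rw [iterW_add]
  exact (hw.prefix_of_length_le u (hu m') hm').iterW σ m

section Growth

variable {f : ℕ → ℕ} {c θ : ℝ}

theorem tendsto_atTop_of_mul_pow_le (hc : 0 < c) (hθ : 1 < θ) (hf : ∀ n, c * θ ^ n ≤ f n) :
    Tendsto f atTop atTop :=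
  tendsto_natCast_atTop_iff.1 <|
    tendsto_atTop_mono hf ((tendsto_pow_atTop_atTop_of_one_lt hθ).const_mul_atTop hc)

theorem frequently_mul_lt_add_of_mul_pow_le (hc : 0 < c) (hθ : 1 < θ)
    (hf : ∀ n, c * θ ^ n ≤ f n) (R : ℕ) : ∃ s, ∃ᶠ n in atTop, R * f n < f (n + s) := by
  obtain ⟨s, hs⟩ := pow_unbounded_of_one_lt (R : ℝ) hθ
  refine ⟨s, fun hev => ?_⟩
  obtain ⟨n₀, hn₀⟩ := eventually_atTop.1 hev
  have hiter : ∀ k, f (n₀ + s * k) ≤ R ^ k * f n₀ := by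
    intro k
    induction k with
    | zero => simp
    | succ k ih =>
      calc f (n₀ + s * (k + 1)) = f (n₀ + s * k + s) := by ring_nf
        _ ≤ R * f (n₀ + s * k) := not_lt.1 (hn₀ _ (by omega))
        _ ≤ R * (R ^ k * f n₀) := by gcongr
        _ = R ^ (k + 1) * f n₀ := by ring
  set q : ℝ := R / θ ^ s
  have hθs : 0 < θ ^ s := by positivity
  have hbound : ∀ k, c * θ ^ n₀ ≤ f n₀ * q ^ k := by
    intro k
    have h := (hf (n₀ + s * k)).trans (Nat.cast_le.2 (hiter k))
    rw [div_pow, mul_div_assoc', le_div_iff₀ (by positivity)]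
    push_cast at h
    calc c * θ ^ n₀ * (θ ^ s) ^ k = c * θ ^ (n₀ + s * k) := by ring
      _ ≤ _ := h.trans_eq (by ring)
  have hq : Tendsto (fun k => (f n₀ : ℝ) * q ^ k) atTop (𝓝 0) := by
    simpa using (tendsto_pow_atTop_nhds_zero_of_lt_one (by positivity)
      ((div_lt_one hθs).2 hs)).const_mul (f n₀ : ℝ)
  obtain ⟨k, hk⟩ := (hq.eventually (gt_mem_nhds (by positivity : 0 < c * θ ^ n₀))).exists
  exact (hbound k).not_gt hk

end Growth

section Spectral

variable {A : Type*} [Fintype A] [DecidableEq A] (σ : A → List A)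

attribute [local instance] Matrix.linftyOpNormedRing Matrix.linftyOpNormedAlgebra

theorem count_iterW (n : ℕ) (i : A) (w : List A) :
    (iterW σ n w).count i = ∑ k : A, w.count k * (iterW σ n [k]).count i := by
  induction w with
  | nil => simp [iterW_nil]
  | cons c w ih =>
    rw [← List.singleton_append, iterW_append, List.count_append, ih]
    simp only [List.count_append, List.count_singleton, add_mul, Finset.sum_add_distrib]
    simp [beq_iff_eq, ite_mul]

theorem incMat_pow_apply (n : ℕ) (i j : A) :
    (incMat σ ^ n) i j = (iterW σ n [j]).count i := by
  induction n generalizing j with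
  | zero =>
    rw [pow_zero, Matrix.one_apply]
    by_cases hij : i = j <;> simp [iterW, hij, Ne.symm]
  | succ n ih =>
    rw [pow_succ, Matrix.mul_apply, iterW_succ, count_iterW]
    simp [ih, incMat, mapW, mul_comm]

theorem norm_incMat_pow_le (n : ℕ) :
    ‖incMat σ ^ n‖ ≤ Fintype.card A * maxLenOn σ univ n := by
  rw [Matrix.linfty_opNorm_def]
  have hrow : ∀ i, ∑ j, ‖(incMat σ ^ n) i j‖₊ ≤ Fintype.card A * maxLenOn σ univ n := by
    intro i
    simp only [incMat_pow_apply, Complex.nnnorm_natCast]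
    exact_mod_cast (Finset.sum_le_card_nsmul _ _ _ fun j _ =>
      (List.count_le_length).trans (length_iterW_singleton_le_maxLenOn σ (mem_univ j) n))
  exact_mod_cast Finset.sup_le fun i _ => hrow i

theorem exists_mul_pow_le_maxLenOn [Nonempty A] (hσ : 1 < specRad σ) :
    ∃ c > (0 : ℝ), ∃ θ > (1 : ℝ), ∀ n, c * θ ^ n ≤ maxLenOn σ univ n := by
  obtain ⟨μ, hμ, hμ1⟩ : ∃ μ ∈ spectrum ℂ (incMat σ), 1 < ‖μ‖ := by
    by_contra! h
    exact hσ.not_ge (Real.sSup_le (by rintro _ ⟨μ, hμ, rfl⟩; exact h μ hμ) zero_le_one)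
  refine ⟨(Fintype.card A : ℝ)⁻¹, by positivity, ‖μ‖, hμ1, fun n => ?_⟩
  rw [inv_mul_le_iff₀ (by simp [Fintype.card_pos])]
  calc ‖μ‖ ^ n = ‖μ ^ n‖ := (norm_pow μ n).symm
    _ ≤ ‖incMat σ ^ n‖ := spectrum.norm_le_norm_of_mem (spectrum.pow_mem_pow _ n hμ)
    _ ≤ _ := norm_incMat_pow_le σ n

end Spectral

section Diophantine

variable {A B : Type*}

theorem fracPow_one_add_div (V : List A) {k : ℕ} (hk : 0 < k) (hkV : k ≤ V.length) :
    fracPow V (1 + k / V.length) = V ++ V.take k := by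
  have hV : (0 : ℝ) < V.length := by exact_mod_cast hk.trans_le hkV
  rcases hkV.eq_or_lt with rfl | hlt
  · rw [div_self hV.ne', List.take_length]
    norm_num [fracPow, List.replicate_succ]
  · have hq0 : (0 : ℝ) ≤ k / V.length := by positivity
    have hq1 : (k / V.length : ℝ) < 1 := (div_lt_one hV).2 (by exact_mod_cast hlt)
    have hfloor : ⌊1 + (k / V.length : ℝ)⌋₊ = 1 := by
      rw [add_comm, Nat.floor_add_one hq0, Nat.floor_eq_zero.2 hq1]
    have hfract : Int.fract (1 + (k / V.length : ℝ)) = k / V.length := by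
      rw [add_comm, Int.fract_add_one, Int.fract_eq_self.2 ⟨hq0, hq1⟩]
    simp [fracPow, hfloor, hfract, div_mul_cancel₀ _ hV.ne']

def HasLongRepetitions (a : ℕ → A) (K : ℕ) : Prop :=
  ∀ N : ℕ, ∃ (U V : List A) (k : ℕ), N ≤ k ∧ k ≤ V.length ∧ U.length + V.length ≤ K * k ∧
    IsPrefOf (U ++ V ++ V.take k) a

theorem HasLongRepetitions.map {a : ℕ → A} {K : ℕ} (h : HasLongRepetitions a K) (φ : A → B) :
    HasLongRepetitions (fun i => φ (a i)) K := fun N => by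
  obtain ⟨U, V, k, hNk, hkV, hUV, hpre⟩ := h N
  refine ⟨U.map φ, V.map φ, k, hNk, by simpa using hkV, by simpa using hUV, ?_⟩
  simpa [List.map_take] using hpre.map a φ

theorem one_lt_dio_of_hasLongRepetitions {a : ℕ → A} {K : ℕ} (h : HasLongRepetitions a K) :
    1 < dio a := by
  set ρ : ℝ := 1 + 1 / (K + 1)
  have hρ : ρ ∈ dioSet a := fun N => by
    obtain ⟨U, V, k, hNk, hkV, hUV, hpre⟩ := h (N + 1)
    have hk : 0 < k := by omega
    have hD : (0 : ℝ) < U.length + V.length := by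
      have : (0 : ℝ) < V.length := by exact_mod_cast hk.trans_le hkV
      positivity
    refine ⟨U, V, 1 + k / V.length, List.ne_nil_of_length_pos (hk.trans_le hkV),
      le_add_of_nonneg_right (by positivity), ?_⟩
    rw [fracPow_one_add_div V hk hkV, ← List.append_assoc]
    refine ⟨hpre, ?_, ?_⟩
    · simp [Nat.min_eq_left hkV]
      omega
    · simp only [List.length_append, List.length_take, Nat.min_eq_left hkV]
      rw [le_div_iff₀ hD]
      have : (U.length + V.length : ℝ) ≤ (K + 1) * k := by
        exact_mod_cast hUV.trans (Nat.mul_le_mul_right k K.le_succ)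
      push_cast
      calc ρ * (U.length + V.length) = U.length + V.length + (U.length + V.length) / (K + 1) := by
            ring
        _ ≤ U.length + V.length + k := by
            gcongr
            rw [div_le_iff₀ (by positivity)]
            linarith
  calc (1 : EReal) = ((1 : ℝ) : EReal) := rfl
    _ < ρ := EReal.coe_lt_coe_iff.2 (lt_add_of_pos_right 1 (by positivity))
    _ ≤ dio a := le_sSup ⟨ρ, hρ, rfl⟩

end Diophantine

section Recurrence

variable {A : Type*} [Fintype A] (u : ℕ → A)

open Classical in
noncomputable def recurrentLetters : Finset A := univ.filter fun c => {i | u i = c}.Infinite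

theorem mem_recurrentLetters {c : A} : c ∈ recurrentLetters u ↔ {i | u i = c}.Infinite := by
  simp [recurrentLetters]

theorem eventually_mem_recurrentLetters : ∀ᶠ i in atTop, u i ∈ recurrentLetters u := by
  rw [← Nat.cofinite_eq_atTop, eventually_cofinite]
  have hsub : {i | u i ∉ recurrentLetters u} ⊆
      ⋃ c ∈ (recurrentLetters u : Set A)ᶜ, {i | u i = c} := fun i hi => Set.mem_biUnion hi rfl
  refine ((Set.toFinite _).biUnion fun c hc => ?_).subset hsub
  simpa [mem_recurrentLetters] using hc

theorem exists_forall_mem_pref (hall : ∀ c, ∃ i, u i = c) : ∃ m, ∀ c, c ∈ pref u m := by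
  refine (eventually_all.2 fun c => ?_ : ∀ᶠ m in atTop, ∀ c, c ∈ pref u m).exists
  obtain ⟨i, rfl⟩ := hall c
  exact (eventually_gt_atTop i).mono fun m hm => mem_pref u hm

theorem exists_forall_mem_recurrentLetters_repeat :
    ∃ J, ∀ c ∈ recurrentLetters u, ∃ i j, i < j ∧ j ≤ J ∧ u i = c ∧ u j = c := by
  refine ((eventually_all_finset _).2 fun c hc => ?_ :
    ∀ᶠ J in atTop, ∀ c ∈ recurrentLetters u, ∃ i j, i < j ∧ j ≤ J ∧ u i = c ∧ u j = c).exists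
  have hinf := (mem_recurrentLetters u).1 hc
  obtain ⟨i, hi⟩ := hinf.nonempty
  obtain ⟨j, hj, hij⟩ := hinf.exists_gt i
  exact (eventually_ge_atTop j).mono fun J hJ => ⟨i, j, hij, hJ, hi, hj⟩

variable {σ : A → List A}

theorem length_iterW_pref_le {s : Finset A} {T : ℕ} (hT : ∀ i, T ≤ i → u i ∈ s) (n ℓ : ℕ) :
    (iterW σ n (pref u ℓ)).length ≤ T * maxLenOn σ univ n + ℓ * maxLenOn σ s n := by
  rw [← List.take_append_drop T (pref u ℓ), iterW_append, List.length_append]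
  refine add_le_add ?_ ?_
  · refine (length_iterW_le_mul_maxLenOn σ (fun c _ => mem_univ c) n).trans ?_
    gcongr
    exact List.length_take_le _ _
  · refine (length_iterW_le_mul_maxLenOn σ (s := s) (fun c hc => ?_) n).trans ?_
    · obtain ⟨k, hk, rfl⟩ := List.getElem_of_mem hc
      rw [List.getElem_drop, getElem_pref]
      exact hT _ (Nat.le_add_right T k)
    · gcongr
      simp

theorem maxLenOn_lt_mul_maxLenOn (hfix : IsFixedWord σ u) {s : Finset A} {T m : ℕ}
    (hT : ∀ i, T ≤ i → u i ∈ s) (hm : ∀ c, c ∈ pref u m) {n k : ℕ}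
    (hn : (T + 1) * maxLenOn σ univ n < maxLenOn σ univ (n + k)) :
    maxLenOn σ univ n < (iterW σ k (pref u m)).length * maxLenOn σ s n := by
  set L := (iterW σ k (pref u m)).length
  have hL : iterW σ k (pref u m) = pref u L :=
    (isPrefOf_iff_eq_pref u).1 (hfix (isPrefOf_pref u m) k)
  have : maxLenOn σ univ (n + k) ≤ T * maxLenOn σ univ n + L * maxLenOn σ s n :=
    calc maxLenOn σ univ (n + k) ≤ (iterW σ (n + k) (pref u m)).length :=
          maxLenOn_le_length_iterW σ (fun c _ => hm c) _
      _ = (iterW σ n (pref u L)).length := by rw [iterW_add, hL]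
      _ ≤ _ := length_iterW_pref_le u hT n L
  linarith

theorem exists_repetition_of_eq (hfix : IsFixedWord σ u) {i j : ℕ} (hij : i < j)
    (hu : u i = u j) (n : ℕ) :
    ∃ U V : List A, (iterW σ n [u j]).length ≤ V.length ∧
      U.length + V.length ≤ j * maxLenOn σ univ n ∧
      IsPrefOf (U ++ V ++ V.take (iterW σ n [u j]).length) u := by
  have hdrop : (pref u j).drop i = [u j] ++ (pref u j).drop (i + 1) := by
    rw [List.drop_eq_getElem_cons (by simpa using hij), getElem_pref, hu, List.singleton_append]
  have hsplit : pref u i ++ (pref u j).drop i = pref u j := by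
    rw [← take_pref u hij.le, List.take_append_drop]
  refine ⟨iterW σ n (pref u i), iterW σ n ((pref u j).drop i), ?_, ?_, ?_⟩
  · rw [hdrop, iterW_append, List.length_append]
    exact Nat.le_add_right _ _
  · rw [← List.length_append, ← iterW_append, hsplit]
    simpa using length_iterW_le_mul_maxLenOn σ (fun c _ => mem_univ c) n (w := pref u j)
  · have hV : (iterW σ n ((pref u j).drop i)).take (iterW σ n [u j]).length =
        iterW σ n [u j] := by
      rw [hdrop, iterW_append, List.take_left]
    rw [hV, ← iterW_append, ← iterW_append, hsplit, ← pref_add_one]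
    exact hfix (isPrefOf_pref u _) n

theorem exists_hasLongRepetitions (hfix : IsFixedWord σ u) (hall : ∀ c, ∃ i, u i = c)
    (hgrowth : ∃ c > (0 : ℝ), ∃ θ > (1 : ℝ), ∀ n, c * θ ^ n ≤ maxLenOn σ univ n) :
    ∃ K, HasLongRepetitions u K := by
  obtain ⟨c₀, hc₀, θ, hθ, hgrow⟩ := hgrowth
  obtain ⟨T, hT⟩ := eventually_atTop.1 (eventually_mem_recurrentLetters u)
  obtain ⟨m, hm⟩ := exists_forall_mem_pref u hall
  obtain ⟨J, hJ⟩ := exists_forall_mem_recurrentLetters_repeat u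
  obtain ⟨s, hs⟩ := frequently_mul_lt_add_of_mul_pow_le hc₀ hθ hgrow (T + 1)
  set L := (iterW σ s (pref u m)).length
  refine ⟨J * L, fun N => ?_⟩
  obtain ⟨n, hn, hNn⟩ := (hs.and_eventually
    ((tendsto_atTop_of_mul_pow_le hc₀ hθ hgrow).eventually_gt_atTop (L * N))).exists
  have hlt := maxLenOn_lt_mul_maxLenOn u hfix hT hm hn
  obtain ⟨c, hcR, hc⟩ := Finset.exists_mem_eq_sup _ ⟨u T, hT T le_rfl⟩
    fun c => (iterW σ n [c]).length
  obtain ⟨i, j, hij, hjJ, hi, rfl⟩ := hJ c hcR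
  obtain ⟨U, V, hkV, hUV, hpre⟩ := exists_repetition_of_eq u hfix hij hi n
  rw [show maxLenOn σ (recurrentLetters u) n = _ from hc] at hlt
  refine ⟨U, V, _, ?_, hkV, ?_, hpre⟩
  · exact (Nat.lt_of_mul_lt_mul_left (hNn.trans hlt)).le
  · calc U.length + V.length ≤ j * maxLenOn σ univ n := hUV
      _ ≤ J * (L * (iterW σ n [u j]).length) := Nat.mul_le_mul hjJ hlt.le
      _ = J * L * (iterW σ n [u j]).length := (Nat.mul_assoc _ _ _).symm

end Recurrence

/-- a sequence generated by a morphism with exponential growth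
(i.e. a coding of a fixed point of a morphism whose incidence matrix has
spectral radius `> 1`) has Diophantine exponent strictly greater than 1. -/
theorem stmt_5 {A B : Type*} [Fintype A] [DecidableEq A] (σ : A → List A) (a₀ : A)
    (hpro : Prolongable σ a₀)
    (u : ℕ → A) (hu : ∀ n : ℕ, IsPrefOf (iterW σ n [a₀]) u)
    (hall : ∀ c : A, ∃ i : ℕ, u i = c)
    (hθ : 1 < specRad σ)
    (φ : A → B) :
    (1 : EReal) < dio (fun i => φ (u i)) := by
  have : Nonempty A := ⟨a₀⟩
  obtain ⟨K, hK⟩ := exists_hasLongRepetitions u (isFixedWord_of_tendsto hpro.2 hu) hall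
    (exists_mul_pow_le_maxLenOn σ hθ)
  exact one_lt_dio_of_hasLongRepetitions (hK.map φ)
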